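/- If X : [t₀, T) → M_n(ℝ) is differentiable, invertible for every t, and satisfies X'(t) + A(t)·X(t) + X(t)·B(t) = F(t) with X(t₀) = X₀, then det X(t) = det X₀ · exp( ∫_{t₀}^t ( tr(X(s)⁻¹·F(s)) − tr(A(s)) − tr(B(s)) ) ds ) for all t in [t₀, T). -/

import Mathlib

/-!
Jacobi's formula gives `(det X)' = det X * tr (X⁻¹ X')`, and substituting the equation for `X'`
and using cyclicity of the trace turns `tr (X⁻¹ X')` into `g = tr (X⁻¹ F) - tr A - tr B`.
Hence `det X` solves the scalar linear equation `y' = g y`, so `y * exp (-∫ g)` has zero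
derivative and `y t = y t₀ * exp (∫_{t₀}^t g)`.
-/

open Matrix intervalIntegral

open Set Real Equiv Filter Topology MeasureTheory

namespace Matrix

variable {ι R : Type*} [Fintype ι] [DecidableEq ι]

theorem det_updateCol_eq_sum_perm [CommRing R] (M : Matrix ι ι R) (k : ι) (b : ι → R) :
    (M.updateCol k b).det =
      ∑ σ : Perm ι, (Perm.sign σ : R) * ((∏ j ∈ Finset.univ.erase k, M (σ j) j) * b (σ k)) := by
  rw [det_apply']
  refine Finset.sum_congr rfl fun σ _ => ?_
  rw [← Finset.prod_erase_mul _ _ (Finset.mem_univ k), updateCol_self]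
  congr 2
  exact Finset.prod_congr rfl fun j hj => updateCol_ne (Finset.ne_of_mem_erase hj)

theorem det_updateCol_eq_det_mul_inv_mulVec [CommRing R] (M : Matrix ι ι R) (k : ι) (b : ι → R)
    (h : IsUnit M.det) : (M.updateCol k b).det = M.det * (M⁻¹ *ᵥ b) k := by
  rw [← cramer_apply, ← det_smul_inv_mulVec_eq_cramer M b h, Pi.smul_apply, smul_eq_mul]

theorem sum_det_updateCol_eq_det_mul_trace [CommRing R] (M N : Matrix ι ι R) (h : IsUnit M.det) :
    ∑ k, (M.updateCol k fun i => N i k).det = M.det * (M⁻¹ * N).trace := by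
  simp only [det_updateCol_eq_det_mul_inv_mulVec M _ _ h, trace, diag, mul_apply, mulVec,
    dotProduct, Finset.mul_sum]

theorem trace_inv_mul_of_add_mul_add_mul_eq [CommRing R] {M N A B F : Matrix ι ι R}
    (hM : IsUnit M) (hN : N + A * M + M * B = F) :
    (M⁻¹ * N).trace = (M⁻¹ * F).trace - A.trace - B.trace := by
  have hdet : IsUnit M.det := (isUnit_iff_isUnit_det M).mp hM
  rw [← hN, Matrix.mul_add, Matrix.mul_add, trace_add, trace_add, trace_mul_cycle',
    mul_nonsing_inv_cancel_left (A := M) A hdet, nonsing_inv_mul_cancel_left (A := M) B hdet]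
  ring

end Matrix

section Jacobi

variable {ι 𝕜 : Type*} [Fintype ι] [DecidableEq ι] [NontriviallyNormedField 𝕜]
  {X : 𝕜 → Matrix ι ι 𝕜} {X' : Matrix ι ι 𝕜} {t : 𝕜}

/- The product rule on each Leibniz term `∏ i, X s (σ i) i`; grouping the summands by the
differentiated column `k` gives the determinant of `X t` with column `k` replaced by that of `X'`. -/
theorem hasDerivAt_det (h : ∀ i j, HasDerivAt (fun s => X s i j) (X' i j) t) :
    HasDerivAt (fun s => (X s).det) (∑ k, ((X t).updateCol k fun i => X' i k).det) t := by
  rw [show (fun s => (X s).det) = _ from funext fun s => det_apply' (X s)]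
  refine (HasDerivAt.fun_sum fun σ _ =>
    (HasDerivAt.fun_finsetProd fun i _ => h (σ i) i).const_mul (Perm.sign σ : 𝕜)).congr_deriv ?_
  simp only [det_updateCol_eq_sum_perm, smul_eq_mul, Finset.mul_sum]
  exact Finset.sum_comm

theorem hasDerivAt_det_of_isUnit (h : ∀ i j, HasDerivAt (fun s => X s i j) (X' i j) t)
    (hX : IsUnit (X t)) :
    HasDerivAt (fun s => (X s).det) ((X t).det * ((X t)⁻¹ * X').trace) t := by
  rw [← sum_det_updateCol_eq_det_mul_trace _ _ ((isUnit_iff_isUnit_det _).mp hX)]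
  exact hasDerivAt_det h

end Jacobi

theorem ContinuousOn.matrix_inv {α ι 𝕜 : Type*} [TopologicalSpace α] [Fintype ι] [DecidableEq ι]
    [Field 𝕜] [TopologicalSpace 𝕜] [IsTopologicalDivisionRing 𝕜]
    {A : α → Matrix ι ι 𝕜} {s : Set α}
    (hA : ContinuousOn A s) (h : ∀ x ∈ s, IsUnit (A x)) : ContinuousOn (fun x => (A x)⁻¹) s := by
  intro x hx
  have hdet : (A x).det ≠ 0 := ((isUnit_iff_isUnit_det _).mp (h x hx)).ne_zero
  have hinv : ContinuousAt Ring.inverse (A x).det := by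
    simpa only [Ring.inverse_eq_inv'] using continuousAt_inv₀ hdet
  exact (continuousAt_matrix_inv _ hinv).comp_continuousWithinAt (hA x hx)

theorem hasDerivWithinAt_integral_Ici {g : ℝ → ℝ} {a b x : ℝ} (hg : ContinuousOn g (Icc a b))
    (hx : x ∈ Ico a b) : HasDerivWithinAt (fun u => ∫ s in a..u, g s) (g x) (Ici x) x := by
  have hmem : Icc a b ∈ 𝓝[>] x :=
    mem_of_superset (Ioo_mem_nhdsGT hx.2) fun y hy => ⟨hx.1.trans hy.1.le, hy.2.le⟩
  exact integral_hasDerivWithinAt_right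
    ((hg.mono (Icc_subset_Icc_right hx.2.le)).intervalIntegrable_of_Icc hx.1)
    ⟨_, hmem, hg.aestronglyMeasurable (μ := volume) measurableSet_Icc⟩
    ((hg x (Ico_subset_Icc_self hx)).mono_of_mem_nhdsWithin hmem)

theorem eq_mul_exp_integral_of_hasDerivWithinAt {f g : ℝ → ℝ} {a b : ℝ} (hab : a ≤ b)
    (hf : ContinuousOn f (Icc a b)) (hg : ContinuousOn g (Icc a b))
    (hderiv : ∀ x ∈ Ico a b, HasDerivWithinAt f (g x * f x) (Ici x) x) :
    f b = f a * exp (∫ s in a..b, g s) := by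
  set G : ℝ → ℝ := fun u => ∫ s in a..u, g s
  have hG : ContinuousOn G (Icc a b) := by
    simpa only [uIcc_of_le hab] using
      continuousOn_primitive_interval' (hg.intervalIntegrable_of_Icc hab) left_mem_uIcc
  have hconst := constant_of_has_deriv_right_zero (f := fun u => f u * exp (-G u))
    (hf.mul (hG.neg.rexp)) (fun x hx => ((hderiv x hx).mul
      (hasDerivWithinAt_integral_Ici hg hx).neg.exp).congr_deriv (by ring)) b ⟨hab, le_rfl⟩
  simp only [G, integral_same, neg_zero, exp_zero, mul_one] at hconst
  rw [← hconst, mul_assoc, ← exp_add, neg_add_cancel, exp_zero, mul_one]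

theorem stmt_2 {n : ℕ} (t₀ T : ℝ) (X X' A B F : ℝ → Matrix (Fin n) (Fin n) ℝ)
    (X₀ : Matrix (Fin n) (Fin n) ℝ)
    (hA : ContinuousOn A (Set.Ico t₀ T)) (hB : ContinuousOn B (Set.Ico t₀ T))
    (hF : ContinuousOn F (Set.Ico t₀ T))
    (hX : ∀ t ∈ Set.Ico t₀ T, ∀ i j, HasDerivAt (fun s => X s i j) (X' t i j) t)
    (hInv : ∀ t ∈ Set.Ico t₀ T, IsUnit (X t))
    (hODE : ∀ t ∈ Set.Ico t₀ T, X' t + A t * X t + X t * B t = F t)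
    (hX0 : X t₀ = X₀) :
    ∀ t ∈ Set.Ico t₀ T,
      (X t).det = X₀.det *
        Real.exp (∫ s in t₀..t,
          (((X s)⁻¹ * F s).trace - (A s).trace - (B s).trace)) := by
  intro t ⟨ht₀, htT⟩
  have hsub : Icc t₀ t ⊆ Ico t₀ T := Icc_subset_Ico_right htT
  have hdet : ∀ s ∈ Ico t₀ T, HasDerivAt (fun u => (X u).det)
      ((((X s)⁻¹ * F s).trace - (A s).trace - (B s).trace) * (X s).det) s := fun s hs => by
    rw [← trace_inv_mul_of_add_mul_add_mul_eq (hInv s hs) (hODE s hs), mul_comm]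
    exact hasDerivAt_det_of_isUnit (hX s hs) (hInv s hs)
  have hXc : ContinuousOn X (Ico t₀ T) := fun s hs =>
    continuousAt_pi.2 (fun i => continuousAt_pi.2 fun j => (hX s hs i j).continuousAt)
      |>.continuousWithinAt
  have htrace := continuous_id.matrix_trace (n := Fin n) (R := ℝ)
  have hg : ContinuousOn (fun s => ((X s)⁻¹ * F s).trace - (A s).trace - (B s).trace)
      (Ico t₀ T) :=
    (htrace.comp_continuousOn ((hXc.matrix_inv hInv).mul hF)).sub (htrace.comp_continuousOn hA)
      |>.sub (htrace.comp_continuousOn hB)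
  rw [← hX0]
  exact eq_mul_exp_integral_of_hasDerivWithinAt ht₀
    (fun s hs => (hdet s (hsub hs)).continuousAt.continuousWithinAt) (hg.mono hsub)
    fun s hs => (hdet s (hsub (Ico_subset_Icc_self hs))).hasDerivWithinAt
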